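/- Let n = 2, m = 1, F((x₁,x₂)ᵀ) ≡ (1,0)ᵀ, B = (0,1)ᵀ, and let C be the annulus {(x₁,x₂)ᵀ : 4 ≤ x₁² + x₂² ≤ 16}. Let y⁰ = (−1,3)ᵀ and y¹ = (1,−3)ᵀ. Then T_C(y⁰,y¹) = ∞, i.e. y¹ is not reachable from y⁰ under the state constraint C. -/

import Mathlib

noncomputable section
open MeasureTheory Set RealInnerProductSpace
open scoped ENNReal

/-- Euclidean state space `ℝ^n`. -/
abbrev Euc (n : ℕ) := EuclideanSpace ℝ (Fin n)

/-- Orthogonal projection onto a subspace, viewed as a map into the ambient space. -/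
noncomputable def projS {n : ℕ} (G : Submodule ℝ (Euc n)) (x : Euc n) : Euc n :=
  (G.orthogonalProjection x : Euc n)

/-- The set of admissible controllability times `T` for the system `ẏ = F(y) + B u`
with state constraint `y(t) ∈ C`, steering `y0` to `y1`.  The control `u` is a
measurable essentially bounded function; the absolutely continuous trajectory `y`
is encoded via the integral equation. -/
def ctrlTimes {n m : ℕ} (F : Euc n → Euc n) (B : Euc m →ₗ[ℝ] Euc n)
    (C : Set (Euc n)) (y0 y1 : Euc n) : Set ℝ :=
  {T | 0 < T ∧ ∃ u : ℝ → Euc m, ∃ y : ℝ → Euc n,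
    Measurable u ∧ (∃ M : ℝ, ∀ t ∈ Icc (0:ℝ) T, ‖u t‖ ≤ M) ∧
    ContinuousOn y (Icc 0 T) ∧
    IntervalIntegrable (fun s => F (y s) + B (u s)) volume 0 T ∧
    (∀ t ∈ Icc (0:ℝ) T, y t = y0 + ∫ s in (0:ℝ)..t, (F (y s) + B (u s))) ∧
    (∀ t ∈ Icc (0:ℝ) T, y t ∈ C) ∧ y 0 = y0 ∧ y T = y1}

/-- The minimal controllability time `T_C(y0, y1)` (with the convention `inf ∅ = ∞`). -/
noncomputable def minTime {n m : ℕ} (F : Euc n → Euc n) (B : Euc m →ₗ[ℝ] Euc n)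
    (C : Set (Euc n)) (y0 y1 : Euc n) : ℝ≥0∞ :=
  sInf (ENNReal.ofReal '' ctrlTimes F B C y0 y1)

/-- The vector `(a, b)ᵀ ∈ ℝ²`. -/
noncomputable def v2 (a b : ℝ) : Euc 2 := (WithLp.equiv 2 _).symm ![a, b]

/-- The control map `B : ℝ → ℝ²`, `u ↦ (0, u)ᵀ`. -/
noncomputable def Bcol2 : Euc 1 →ₗ[ℝ] Euc 2 :=
  Matrix.toEuclideanLin (!![0; 1] : Matrix (Fin 2) (Fin 1) ℝ)

/-- The annulus `C = {(x₁,x₂) : 4 ≤ x₁² + x₂² ≤ 16}`. -/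
def annulus : Set (Euc 2) :=
  {x : Euc 2 | 4 ≤ (x 0)^2 + (x 1)^2 ∧ (x 0)^2 + (x 1)^2 ≤ 16}

/-!
The control only acts on the second coordinate, so the first one moves at unit speed:
`y₁(t) = -1 + t`, which forces `T = 2`.  The second coordinate goes from `3` to `-3`, so it
vanishes at some `t ∈ [0, 2]`; there `|y(t)| = |t - 1| ≤ 1`, and `y(t)` lies inside the hole of
the annulus.
-/

@[simp] lemma v2_apply_zero (a b : ℝ) : v2 a b 0 = a := by simp [v2]

@[simp] lemma v2_apply_one (a b : ℝ) : v2 a b 1 = b := by simp [v2]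

@[simp] lemma Bcol2_apply_zero (u : Euc 1) : Bcol2 u 0 = 0 := by
  simp [Bcol2, Matrix.toLpLin_apply, dotProduct]

lemma four_le_sq_of_mem_annulus_of_apply_one_eq_zero {x : Euc 2} (hx : x ∈ annulus)
    (h : x 1 = 0) : 4 ≤ x 0 ^ 2 := by
  simpa [h] using hx.1

lemma exists_trajectory_of_mem_ctrlTimes {n m : ℕ} {F : Euc n → Euc n} {B : Euc m →ₗ[ℝ] Euc n}
    {C : Set (Euc n)} {y0 y1 : Euc n} {T : ℝ} (hT : T ∈ ctrlTimes F B C y0 y1)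
    (ℓ : Euc n →L[ℝ] ℝ) {c : ℝ} (hB : ∀ v, ℓ (B v) = 0) (hF : ∀ x, ℓ (F x) = c) :
    0 < T ∧ ∃ y : ℝ → Euc n, ContinuousOn y (Icc 0 T) ∧
      (∀ t ∈ Icc (0:ℝ) T, y t ∈ C ∧ ℓ (y t) = ℓ y0 + c * t) ∧ y 0 = y0 ∧ y T = y1 := by
  obtain ⟨hT, u, y, -, -, hy, hint, hsol, hC, hy0, hyT⟩ := hT
  refine ⟨hT, y, hy, fun t ht => ⟨hC t ht, ?_⟩, hy0, hyT⟩
  have hint_t : IntervalIntegrable (fun s => F (y s) + B (u s)) volume 0 t :=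
    hint.mono_set (by rw [uIcc_of_le ht.1, uIcc_of_le hT.le]; exact Icc_subset_Icc le_rfl ht.2)
  rw [hsol t ht, map_add, ← ℓ.intervalIntegral_comp_comm hint_t]
  simp only [map_add, hF, hB, add_zero, intervalIntegral.integral_const, sub_zero, smul_eq_mul]
  ring

/-- Example 2 of the paper.  For the system `ẏ = (1,0)ᵀ + (0,1)ᵀ u`
on the annulus `C = {4 ≤ x₁² + x₂² ≤ 16}`, the point `y¹ = (1,-3)ᵀ` is not reachable
from `y⁰ = (-1,3)ᵀ` under the state constraint `C`: `T_C(y⁰, y¹) = ∞`. -/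
theorem example_annulus_not_reachable :
    minTime (fun _ : Euc 2 => v2 1 0) Bcol2 annulus (v2 (-1) 3) (v2 1 (-3)) = ⊤ := by
  suffices ctrlTimes (fun _ : Euc 2 => v2 1 0) Bcol2 annulus (v2 (-1) 3) (v2 1 (-3)) = ∅ by
    simp [minTime, this]
  refine eq_empty_iff_forall_notMem.2 fun T hT => ?_
  obtain ⟨hT, y, hy, hyC, hy0, hyT⟩ :=
    exists_trajectory_of_mem_ctrlTimes hT (EuclideanSpace.proj 0) (c := 1)
      Bcol2_apply_zero (fun _ => v2_apply_zero 1 0)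
  have hy₁ : ∀ t ∈ Icc (0:ℝ) T, y t 0 = -1 + t := fun t ht => by
    simpa using (hyC t ht).2
  have hT2 : T = 2 := by
    have := hy₁ T ⟨hT.le, le_rfl⟩
    rw [hyT, v2_apply_zero] at this
    linarith
  subst hT2
  obtain ⟨t, ht, hyt⟩ : ∃ t ∈ Icc (0:ℝ) 2, y t 1 = 0 := by
    refine intermediate_value_Icc' zero_le_two
      ((EuclideanSpace.proj (1 : Fin 2)).continuous.comp_continuousOn hy) ?_
    simp only [Function.comp_apply, PiLp.proj_apply, hy0, hyT, v2_apply_one]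
    norm_num
  have hsq := four_le_sq_of_mem_annulus_of_apply_one_eq_zero (hyC t ht).1 hyt
  rw [hy₁ t ht] at hsq
  nlinarith [ht.1, ht.2]
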